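/- Let λ > 0, let c₁, c₂ : ℝ → (0,∞) be continuous, and let Φ₁(x) = ∫₀^x dw/c₁(w), Φ₂(y) = ∫₀^y dz/c₂(z). Then the function p(x,y,t) = (λ/(2π)) · exp( −λt + λ√(t² − Φ₁(x)² − Φ₂(y)²) ) / √(t² − Φ₁(x)² − Φ₂(y)²) satisfies the planar damped wave equation with space-varying velocities ∂²p/∂t² + 2λ ∂p/∂t = c₁(x) ∂/∂x( c₁(x) ∂p/∂x ) + c₂(y) ∂/∂y( c₂(y) ∂p/∂y ) for all (x,y,t) with t > 0 and Φ₁(x)² + Φ₂(y)² < t². -/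

import Mathlib

/-!
Since `Φ' = 1/c`, the operator `c ∂(c ∂ ·)` becomes `∂²/∂u²` in the variable `u = Φ(x)`, so it
suffices that the kernel `K(t, u, v)` solves the constant-coefficient equation
`K_tt + 2λ K_t = K_uu + K_vv` on `u² + v² < t²`. Writing `K = (λ/2π) e^{-λt} g(t² - u² - v²)` with
`g(q) = e^{λ√q}/√q`, the factor `e^{-λt}` turns this into the Klein–Gordon equation for
`g(t² - u² - v²)`, which reduces to the ODE `4q g'' + 6g' = λ² g`. In the variable `r = √q` that
ODE reads `(r h)'' = λ² (r h)` for `h(r) = g(r²)`, and indeed `r h(r) = e^{λr}`.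
-/

open Real MeasureTheory

/-- `Φ_c x = ∫₀ˣ dw / c(w)`. -/
noncomputable def Phi (c : ℝ → ℝ) (x : ℝ) : ℝ := ∫ w in (0:ℝ)..x, (c w)⁻¹

theorem hasDerivAt_Phi {c : ℝ → ℝ} (hc : Continuous c) (hc₀ : ∀ w, c w ≠ 0) (x : ℝ) :
    HasDerivAt (Phi c) (c x)⁻¹ x :=
  ((hc.inv₀ hc₀).integral_hasStrictDerivAt 0 x).hasDerivAt

theorem mul_deriv_mul_deriv_comp_eq_iteratedDeriv_two {c Φ f : ℝ → ℝ} {x : ℝ}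
    (hΦ : ∀ x, HasDerivAt Φ (c x)⁻¹ x) (hc : ∀ x, c x ≠ 0) (hf : ContDiffAt ℝ 2 f (Φ x)) :
    c x * deriv (fun x' => c x' * deriv (fun x'' => f (Φ x'')) x') x = iteratedDeriv 2 f (Φ x) := by
  have hf' : ∀ᶠ x' in nhds x, DifferentiableAt ℝ f (Φ x') :=
    (hΦ x).continuousAt.eventually
      ((hf.eventually (by simp)).mono fun _ h => h.differentiableAt (by norm_num))
  have hflat : (fun x' => c x' * deriv (fun x'' => f (Φ x'')) x') =ᶠ[nhds x]
      fun x' => deriv f (Φ x') :=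
    hf'.mono fun x' h => by
      have hd : HasDerivAt (fun x'' => f (Φ x'')) _ x' := h.hasDerivAt.comp x' (hΦ x')
      dsimp only
      rw [hd.deriv]
      field_simp [hc x']
  have hf₁ : DifferentiableAt ℝ (deriv f) (Φ x) :=
    (hf.derivWithin (m := 1) (by norm_num)).differentiableAt (by norm_num)
  have hd : HasDerivAt (fun x' => deriv f (Φ x')) _ x := hf₁.hasDerivAt.comp x (hΦ x)
  rw [hflat.deriv_eq, hd.deriv, iteratedDeriv_succ, iteratedDeriv_one]
  field_simp [hc x]

theorem iteratedDeriv_two_comp_quadratic {G : ℝ → ℝ} {a b s : ℝ}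
    (hG : ContDiffAt ℝ 2 G (a + b * s ^ 2)) :
    iteratedDeriv 2 (fun s => G (a + b * s ^ 2)) s
      = 4 * b ^ 2 * s ^ 2 * iteratedDeriv 2 G (a + b * s ^ 2)
        + 2 * b * deriv G (a + b * s ^ 2) := by
  have hQ : ContDiffAt ℝ 2 (fun s => a + b * s ^ 2) s := by fun_prop
  rw [← Function.comp_def G, iteratedDeriv_comp_two (f := fun s => a + b * s ^ 2) hG hQ]
  simp [iteratedDeriv_succ]
  ring

theorem iteratedDeriv_two_exp_mul_add_deriv {w : ℝ → ℝ} {t : ℝ} (lam : ℝ)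
    (hw : ContDiffAt ℝ 2 w t) :
    iteratedDeriv 2 (fun s => exp (-lam * s) * w s) t
      + 2 * lam * deriv (fun s => exp (-lam * s) * w s) t
      = exp (-lam * t) * (iteratedDeriv 2 w t - lam ^ 2 * w t) := by
  have he : ContDiffAt ℝ 2 (fun s => exp (-lam * s)) t := by fun_prop
  have hd : ∀ n, iteratedDeriv n (fun s => exp (-lam * s)) t = (-lam) ^ n * exp (-lam * t) :=
    fun n => congrFun (iteratedDeriv_exp_const_mul n (-lam)) t
  rw [iteratedDeriv_fun_mul he hw, deriv_fun_mul (he.differentiableAt (by norm_num))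
    (hw.differentiableAt (by norm_num)), ← iteratedDeriv_one, hd]
  simp only [Finset.sum_range_succ, Finset.sum_range_zero, hd]
  norm_num
  ring

noncomputable def dampedWaveProfile (lam q : ℝ) : ℝ := exp (lam * √q) / √q

section Profile

variable {lam q : ℝ}

theorem contDiffAt_dampedWaveProfile {n : WithTop ℕ∞} (hq : 0 < q) :
    ContDiffAt ℝ n (dampedWaveProfile lam) q :=
  ((contDiffAt_sqrt hq.ne').const_smul lam).exp.div (contDiffAt_sqrt hq.ne') (sqrt_pos.2 hq).ne'

theorem hasDerivAt_dampedWaveProfile (hq : 0 < q) :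
    HasDerivAt (dampedWaveProfile lam) (exp (lam * √q) * (lam * √q - 1) / (2 * q * √q)) q := by
  have hs := hasDerivAt_sqrt hq.ne'
  refine (((hs.const_mul lam).exp).div hs (sqrt_pos.2 hq).ne').congr_deriv ?_
  obtain ⟨r, hr, rfl⟩ : ∃ r, 0 < r ∧ r ^ 2 = q := ⟨√q, sqrt_pos.2 hq, sq_sqrt hq.le⟩
  rw [sqrt_sq hr.le]
  field_simp

theorem hasDerivAt_dampedWaveProfile_deriv (hq : 0 < q) :
    HasDerivAt (fun q => exp (lam * √q) * (lam * √q - 1) / (2 * q * √q))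
      (exp (lam * √q) * (lam ^ 2 * q - 3 * (lam * √q) + 3) / (4 * q ^ 2 * √q)) q := by
  have hs := hasDerivAt_sqrt hq.ne'
  have hnum := ((hs.const_mul lam).exp).fun_mul ((hs.const_mul lam).sub_const 1)
  have hden := ((hasDerivAt_id' q).const_mul 2).fun_mul hs
  have hq' : 0 < √q := sqrt_pos.2 hq
  refine (hnum.div hden (by positivity)).congr_deriv ?_
  obtain ⟨r, hr, rfl⟩ : ∃ r, 0 < r ∧ r ^ 2 = q := ⟨√q, sqrt_pos.2 hq, sq_sqrt hq.le⟩
  rw [sqrt_sq hr.le]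
  field_simp
  ring

theorem dampedWaveProfile_ode (hq : 0 < q) :
    lam ^ 2 * dampedWaveProfile lam q
      = 6 * deriv (dampedWaveProfile lam) q
        + 4 * q * iteratedDeriv 2 (dampedWaveProfile lam) q := by
  have hderiv : deriv (dampedWaveProfile lam) =ᶠ[nhds q]
      fun q => exp (lam * √q) * (lam * √q - 1) / (2 * q * √q) :=
    (lt_mem_nhds hq).mono fun q' hq' => (hasDerivAt_dampedWaveProfile hq').deriv
  rw [iteratedDeriv_succ, iteratedDeriv_one, hderiv.deriv_eq, hderiv.eq_of_nhds,
    (hasDerivAt_dampedWaveProfile_deriv hq).deriv, dampedWaveProfile]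
  obtain ⟨r, hr, rfl⟩ : ∃ r, 0 < r ∧ r ^ 2 = q := ⟨√q, sqrt_pos.2 hq, sq_sqrt hq.le⟩
  rw [sqrt_sq hr.le]
  field_simp
  ring

end Profile

noncomputable def dampedWaveKernel (lam t u v : ℝ) : ℝ :=
  lam / (2 * π) * exp (-(lam * t) + lam * √(t ^ 2 - u ^ 2 - v ^ 2)) / √(t ^ 2 - u ^ 2 - v ^ 2)

section Kernel

variable {lam t u v : ℝ}

theorem dampedWaveKernel_eq (lam t u v : ℝ) :
    dampedWaveKernel lam t u v
      = lam / (2 * π) * (exp (-lam * t) * dampedWaveProfile lam (t ^ 2 - u ^ 2 - v ^ 2)) := by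
  rw [dampedWaveKernel, dampedWaveProfile, exp_add, neg_mul]
  ring

theorem dampedWaveKernel_comm (lam t u v : ℝ) :
    dampedWaveKernel lam t u v = dampedWaveKernel lam t v u := by
  simp only [dampedWaveKernel_eq, sub_sub, add_comm (u ^ 2)]

theorem contDiffAt_dampedWaveKernel_snd {n : WithTop ℕ∞} (h : u ^ 2 + v ^ 2 < t ^ 2) :
    ContDiffAt ℝ n (fun u' => dampedWaveKernel lam t u' v) u := by
  simp only [dampedWaveKernel_eq]
  have hg : ContDiffAt ℝ n (fun u' => dampedWaveProfile lam (t ^ 2 - u' ^ 2 - v ^ 2)) u :=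
    (contDiffAt_dampedWaveProfile (by linarith)).comp u (f := fun u' => t ^ 2 - u' ^ 2 - v ^ 2)
      (by fun_prop)
  exact contDiffAt_const.mul (contDiffAt_const.mul hg)

theorem contDiffAt_dampedWaveKernel_thd {n : WithTop ℕ∞} (h : u ^ 2 + v ^ 2 < t ^ 2) :
    ContDiffAt ℝ n (fun v' => dampedWaveKernel lam t u v') v := by
  simp only [dampedWaveKernel_comm lam t u]
  exact contDiffAt_dampedWaveKernel_snd (by linarith)

theorem iteratedDeriv_two_dampedWaveKernel_snd (h : u ^ 2 + v ^ 2 < t ^ 2) :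
    iteratedDeriv 2 (fun u' => dampedWaveKernel lam t u' v) u
      = lam / (2 * π) * exp (-lam * t) *
        (4 * u ^ 2 * iteratedDeriv 2 (dampedWaveProfile lam) (t ^ 2 - u ^ 2 - v ^ 2)
          - 2 * deriv (dampedWaveProfile lam) (t ^ 2 - u ^ 2 - v ^ 2)) := by
  have hq : t ^ 2 - v ^ 2 + -1 * u ^ 2 = t ^ 2 - u ^ 2 - v ^ 2 := by ring
  have hfun : (fun u' => dampedWaveKernel lam t u' v) = fun u' => lam / (2 * π) *
      (exp (-lam * t) * dampedWaveProfile lam (t ^ 2 - v ^ 2 + -1 * u' ^ 2)) := by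
    funext u'
    rw [dampedWaveKernel_eq]
    ring_nf
  rw [hfun, iteratedDeriv_const_mul_field, iteratedDeriv_const_mul_field,
    iteratedDeriv_two_comp_quadratic (by rw [hq]; exact contDiffAt_dampedWaveProfile (by linarith)),
    hq]
  ring

theorem iteratedDeriv_two_add_deriv_dampedWaveKernel_fst (h : u ^ 2 + v ^ 2 < t ^ 2) :
    iteratedDeriv 2 (fun s => dampedWaveKernel lam s u v) t
        + 2 * lam * deriv (fun s => dampedWaveKernel lam s u v) t
      = lam / (2 * π) * exp (-lam * t) *
        (4 * t ^ 2 * iteratedDeriv 2 (dampedWaveProfile lam) (t ^ 2 - u ^ 2 - v ^ 2)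
          + 2 * deriv (dampedWaveProfile lam) (t ^ 2 - u ^ 2 - v ^ 2)
          - lam ^ 2 * dampedWaveProfile lam (t ^ 2 - u ^ 2 - v ^ 2)) := by
  have hq : -(u ^ 2 + v ^ 2) + 1 * t ^ 2 = t ^ 2 - u ^ 2 - v ^ 2 := by ring
  have hfun : (fun s => dampedWaveKernel lam s u v) = fun s => lam / (2 * π) *
      (exp (-lam * s) * dampedWaveProfile lam (-(u ^ 2 + v ^ 2) + 1 * s ^ 2)) := by
    funext s
    rw [dampedWaveKernel_eq]
    ring_nf
  have hG : ContDiffAt ℝ 2 (dampedWaveProfile lam) (-(u ^ 2 + v ^ 2) + 1 * t ^ 2) := by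
    rw [hq]; exact contDiffAt_dampedWaveProfile (by linarith)
  have hw : ContDiffAt ℝ 2 (fun s => dampedWaveProfile lam (-(u ^ 2 + v ^ 2) + 1 * s ^ 2)) t :=
    hG.comp t (f := fun s => -(u ^ 2 + v ^ 2) + 1 * s ^ 2) (by fun_prop)
  rw [hfun, iteratedDeriv_const_mul_field, deriv_const_mul_field, mul_left_comm, ← mul_add,
    iteratedDeriv_two_exp_mul_add_deriv lam hw,
    iteratedDeriv_two_comp_quadratic hG, hq]
  ring

theorem dampedWaveKernel_damped_wave_equation (h : u ^ 2 + v ^ 2 < t ^ 2) :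
    iteratedDeriv 2 (fun s => dampedWaveKernel lam s u v) t
        + 2 * lam * deriv (fun s => dampedWaveKernel lam s u v) t
      = iteratedDeriv 2 (fun u' => dampedWaveKernel lam t u' v) u
        + iteratedDeriv 2 (fun v' => dampedWaveKernel lam t u v') v := by
  have hv : v ^ 2 + u ^ 2 < t ^ 2 := by linarith
  simp only [dampedWaveKernel_comm lam t u]
  rw [iteratedDeriv_two_add_deriv_dampedWaveKernel_fst h,
    iteratedDeriv_two_dampedWaveKernel_snd h,
    iteratedDeriv_two_dampedWaveKernel_snd hv,
    show t ^ 2 - v ^ 2 - u ^ 2 = t ^ 2 - u ^ 2 - v ^ 2 by ring]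
  linear_combination (-(lam / (2 * π) * exp (-lam * t))) * dampedWaveProfile_ode (lam := lam)
    (q := t ^ 2 - u ^ 2 - v ^ 2) (by linarith)

end Kernel

theorem planar_damped_wave_space_varying_velocities_general
    (lam : ℝ)
    (c₁ c₂ : ℝ → ℝ) (hc₁ : Continuous c₁) (hc₂ : Continuous c₂)
    (hc₁pos : ∀ x, 0 < c₁ x) (hc₂pos : ∀ y, 0 < c₂ y)
    (p : ℝ → ℝ → ℝ → ℝ)
    (hp : ∀ x y, ∀ t : ℝ,
      p x y t = (lam / (2 * Real.pi)) *
        Real.exp (-(lam*t) + lam * Real.sqrt (t^2 - (Phi c₁ x)^2 - (Phi c₂ y)^2))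
          / Real.sqrt (t^2 - (Phi c₁ x)^2 - (Phi c₂ y)^2)) :
    ∀ x y t : ℝ, 0 < t → (Phi c₁ x)^2 + (Phi c₂ y)^2 < t^2 →
      iteratedDeriv 2 (fun s => p x y s) t + 2 * lam * deriv (fun s => p x y s) t
        = c₁ x * deriv (fun x' => c₁ x' * deriv (fun x'' => p x'' y t) x') x
          + c₂ y * deriv (fun y' => c₂ y' * deriv (fun y'' => p x y'' t) y') y := by
  intro x y t _ hxy
  have hp' : ∀ x y t, p x y t = dampedWaveKernel lam t (Phi c₁ x) (Phi c₂ y) := hp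
  have hc₁₀ : ∀ x, c₁ x ≠ 0 := fun x => (hc₁pos x).ne'
  have hc₂₀ : ∀ y, c₂ y ≠ 0 := fun y => (hc₂pos y).ne'
  simp only [hp']
  rw [mul_deriv_mul_deriv_comp_eq_iteratedDeriv_two (hasDerivAt_Phi hc₁ hc₁₀) hc₁₀
      (contDiffAt_dampedWaveKernel_snd hxy),
    mul_deriv_mul_deriv_comp_eq_iteratedDeriv_two (hasDerivAt_Phi hc₂ hc₂₀) hc₂₀
      (contDiffAt_dampedWaveKernel_thd hxy)]
  exact dampedWaveKernel_damped_wave_equation hxy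

theorem planar_damped_wave_space_varying_velocities
    (lam : ℝ) (hlam : 0 < lam)
    (c₁ c₂ : ℝ → ℝ) (hc₁ : Continuous c₁) (hc₂ : Continuous c₂)
    (hc₁pos : ∀ x, 0 < c₁ x) (hc₂pos : ∀ y, 0 < c₂ y)
    (p : ℝ → ℝ → ℝ → ℝ)
    (hp : ∀ x y, ∀ t : ℝ,
      p x y t = (lam / (2 * Real.pi)) *
        Real.exp (-(lam*t) + lam * Real.sqrt (t^2 - (Phi c₁ x)^2 - (Phi c₂ y)^2))
          / Real.sqrt (t^2 - (Phi c₁ x)^2 - (Phi c₂ y)^2)) :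
    ∀ x y t : ℝ, 0 < t → (Phi c₁ x)^2 + (Phi c₂ y)^2 < t^2 →
      iteratedDeriv 2 (fun s => p x y s) t + 2 * lam * deriv (fun s => p x y s) t
        = c₁ x * deriv (fun x' => c₁ x' * deriv (fun x'' => p x'' y t) x') x
          + c₂ y * deriv (fun y' => c₂ y' * deriv (fun y'' => p x y'' t) y') y :=
  planar_damped_wave_space_varying_velocities_general lam c₁ c₂ hc₁ hc₂ hc₁pos hc₂pos p hp
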